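/- arXiv:1705.04484 — 3 statements merged into one kernel-verified Lean document; each statement's English description precedes it below -/
import Mathlib

section
/- Let G be a finite graph with symmetric edge weights and let Ω be a finite subset of vertices with vertex boundary δΩ. Then the Escobar-type Cheeger constant satisfies h_E(Ω̃) = inf over all real-valued functions f on Ω̄ of ( Σ_{e={x,y} ∈ E(Ω,Ω̄)} μ_{xy} |f(x) − f(y)| ) / ( inf_{a ∈ ℝ} Σ_{x ∈ δΩ} m_x |f(x) − a| ), where the infimum is over nonconstant f (so that the denominator is nonzero). -/
/-! Indicator functions of admissible sets realise the cut quotients of `h_E` as Sobolev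
quotients, which gives one inequality. For the other, subtract a weighted median `c` of `f` on
`δΩ`: both `(f - c)⁺` and `(c - f)⁺` are positive on at most half of the boundary mass, and the
edge variation splits as the sum of theirs. A nonnegative `g` of this kind is the sum of `t • 1_S`
(`t` its least positive value, `S` its support) and `(g - t)⁺`, which has smaller support; both the
boundary mass and the edge variation are additive along this decomposition, and `S` is admissible,
so by induction `h_E · Σ_{δΩ} m g` is at most the edge variation of `g`. -/

open scoped Classical
open Finset

variable {V : Type*} [Fintype V]

/-- The vertex boundary δΩ of a finite set Ω of vertices. -/
noncomputable def bdry (μ : V → V → ℝ) (Ω : Finset V) : Finset V :=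
  Finset.univ.filter fun x => x ∉ Ω ∧ ∃ y ∈ Ω, 0 < μ x y

/-- Ω̄ = Ω ∪ δΩ. -/
noncomputable def clos (μ : V → V → ℝ) (Ω : Finset V) : Finset V :=
  Ω ∪ bdry μ Ω

/-- The vertex measure m on Ω̄. -/
noncomputable def vm (μ : V → V → ℝ) (Ω : Finset V) (x : V) : ℝ :=
  if x ∈ Ω then ∑ y, μ x y else ∑ y ∈ Ω, μ x y

/-- m(B) = Σ_{x ∈ B} m_x. -/
noncomputable def msum (μ : V → V → ℝ) (Ω : Finset V) (B : Finset V) : ℝ :=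
  ∑ x ∈ B, vm μ Ω x

/-- Sum over the edges e = {x,y} of E(Ω,Ω̄) of μ_{xy} · F x y (for symmetric F). -/
noncomputable def edgeSum (μ : V → V → ℝ) (Ω : Finset V) (F : V → V → ℝ) : ℝ :=
  (∑ x ∈ Ω, ∑ y ∈ Ω, μ x y * F x y) / 2 +
    ∑ x ∈ Ω, ∑ y ∈ bdry μ Ω, μ x y * F x y

/-- Dirichlet energy D_Ω(f). -/
noncomputable def dirichlet (μ : V → V → ℝ) (Ω : Finset V) (f : V → ℝ) : ℝ :=
  edgeSum μ Ω fun x y => (f x - f y) ^ 2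

/-- Dirichlet form D_Ω(f,g). -/
noncomputable def dform (μ : V → V → ℝ) (Ω : Finset V) (f g : V → ℝ) : ℝ :=
  edgeSum μ Ω fun x y => (f x - f y) * (g x - g y)

/-- μ(∂_Ω A): total weight of the edges of E(Ω,Ω̄) with exactly one endpoint in A. -/
noncomputable def cut (μ : V → V → ℝ) (Ω : Finset V) (A : Finset V) : ℝ :=
  edgeSum μ Ω fun x y => if (x ∈ A) ↔ (y ∈ A) then 0 else 1

/-- The graph Laplacian Δf(x) (used for x ∈ Ω). -/
noncomputable def lap (μ : V → V → ℝ) (Ω : Finset V) (f : V → ℝ) (x : V) : ℝ :=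
  (∑ y, μ x y * (f y - f x)) / vm μ Ω x

/-- The outward normal derivative ∂f/∂n(z) (used for z ∈ δΩ). -/
noncomputable def nderiv (μ : V → V → ℝ) (Ω : Finset V) (f : V → ℝ) (z : V) : ℝ :=
  (∑ x ∈ Ω, μ z x * (f z - f x)) / vm μ Ω z

/-- f is harmonic on Ω. -/
def IsHarmonic (μ : V → V → ℝ) (Ω : Finset V) (u : V → ℝ) : Prop :=
  ∀ x ∈ Ω, lap μ Ω u x = 0

/-- Adjacency in the graph Ω̃ = (Ω̄, E(Ω,Ω̄)). -/
def tilAdj (μ : V → V → ℝ) (Ω : Finset V) (x y : V) : Prop :=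
  0 < μ x y ∧ (x ∈ Ω ∨ y ∈ Ω)

/-- The graph Ω̃ is connected. -/
def TilConnected (μ : V → V → ℝ) (Ω : Finset V) : Prop :=
  ∀ x ∈ clos μ Ω, ∀ y ∈ clos μ Ω, Relation.ReflTransGen (tilAdj μ Ω) x y

/-- λ₁(Ω): the first nontrivial eigenvalue of the Dirichlet-to-Neumann operator,
characterized by its Rayleigh quotient. -/
noncomputable def lambda1 (μ : V → V → ℝ) (Ω : Finset V) : ℝ :=
  sInf { r : ℝ | ∃ u : V → ℝ, IsHarmonic μ Ω u ∧
    (∑ x ∈ bdry μ Ω, u x ^ 2 * vm μ Ω x) = 1 ∧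
    (∑ x ∈ bdry μ Ω, u x * vm μ Ω x) = 0 ∧
    r = dirichlet μ Ω u }

/-- The Escobar-type Cheeger constant h_E(Ω̃). -/
noncomputable def hE (μ : V → V → ℝ) (Ω : Finset V) : ℝ :=
  sInf { r : ℝ | ∃ A : Finset V, A ⊆ clos μ Ω ∧
    0 < msum μ Ω (A ∩ bdry μ Ω) ∧
    msum μ Ω (A ∩ bdry μ Ω) ≤ msum μ Ω (bdry μ Ω) / 2 ∧
    r = cut μ Ω A / msum μ Ω (A ∩ bdry μ Ω) }

/-- The Jammes-type Cheeger constant h_J(Ω̃). -/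
noncomputable def hJ (μ : V → V → ℝ) (Ω : Finset V) : ℝ :=
  sInf { r : ℝ | ∃ A : Finset V, A ⊆ clos μ Ω ∧
    (A ∩ bdry μ Ω).Nonempty ∧
    msum μ Ω A ≤ msum μ Ω (clos μ Ω) / 2 ∧
    r = cut μ Ω A / msum μ Ω (A ∩ bdry μ Ω) }

/-- The classical Cheeger constant h(Ω̃). -/
noncomputable def cheeger (μ : V → V → ℝ) (Ω : Finset V) : ℝ :=
  sInf { r : ℝ | ∃ A : Finset V, A ⊆ clos μ Ω ∧ A.Nonempty ∧
    msum μ Ω A ≤ msum μ Ω (clos μ Ω) / 2 ∧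
    r = cut μ Ω A / msum μ Ω A }

lemma abs_sub_eq_posPart_add_posPart (a b c : ℝ) :
    |a - b| = |(a - c)⁺ - (b - c)⁺| + |(c - a)⁺ - (c - b)⁺| := by
  wlog hab : a ≤ b generalizing a b
  · rw [abs_sub_comm a, abs_sub_comm (a - c)⁺, abs_sub_comm (c - a)⁺]
    exact this b a (le_of_not_ge hab)
  rw [abs_of_nonpos (sub_nonpos.2 hab), abs_of_nonpos (sub_nonpos.2 (posPart_mono (by linarith))),
    abs_of_nonneg (sub_nonneg.2 (posPart_mono (by linarith)))]
  have ha := posPart_sub_negPart (a - c)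
  have hb := posPart_sub_negPart (b - c)
  rw [← posPart_neg, neg_sub] at ha hb
  linarith

theorem Finset.exists_weighted_median {ι : Type*} (s : Finset ι) (w f : ι → ℝ)
    (hw : ∀ i ∈ s, 0 ≤ w i) :
    ∃ c, ∑ i ∈ s.filter (c < f ·), w i ≤ (∑ i ∈ s, w i) / 2 ∧
      ∑ i ∈ s.filter (f · < c), w i ≤ (∑ i ∈ s, w i) / 2 := by
  rcases s.eq_empty_or_nonempty with rfl | hs
  · exact ⟨0, by simp⟩
  have hW : 0 ≤ ∑ i ∈ s, w i := sum_nonneg hw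
  -- `c` is the least value of `f` at which the cumulative weight reaches half the total.
  set T := s.filter fun z => (∑ i ∈ s, w i) / 2 ≤ ∑ i ∈ s.filter (f · ≤ f z), w i
  have hT : T.Nonempty := by
    obtain ⟨z, hz, hmax⟩ := s.exists_max_image f hs
    refine ⟨z, mem_filter.2 ⟨hz, ?_⟩⟩
    rw [filter_true_of_mem hmax]
    linarith
  obtain ⟨z, hzT, hmin⟩ := T.exists_min_image f hT
  obtain ⟨hz, hzhalf⟩ := mem_filter.1 hzT
  refine ⟨f z, ?_, ?_⟩
  · have := sum_filter_add_sum_filter_not s (f z < f ·) w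
    simp only [not_lt] at this
    linarith
  · by_contra! hgt
    obtain ⟨y, hy, hmax⟩ := (s.filter (f · < f z)).exists_max_image f
      (nonempty_of_sum_ne_zero (show ∑ i ∈ s.filter (f · < f z), w i ≠ 0 by linarith))
    obtain ⟨hys, hyz⟩ := mem_filter.1 hy
    have hsub : s.filter (f · < f z) ⊆ s.filter (f · ≤ f y) :=
      monotone_filter_right _ fun i hi hiz => hmax i (mem_filter.2 ⟨hi, hiz⟩)
    have hle := sum_le_sum_of_subset_of_nonneg hsub fun i hi _ => hw i (filter_subset _ _ hi)
    have hyT : y ∈ T := mem_filter.2 ⟨hys, by linarith⟩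
    exact (hmin y hyT).not_gt hyz

noncomputable def edgeVariation (μ : V → V → ℝ) (Ω : Finset V) (f : V → ℝ) : ℝ :=
  edgeSum μ Ω fun x y => |f x - f y|

noncomputable def bdryDeviation (μ : V → V → ℝ) (Ω : Finset V) (f : V → ℝ) : ℝ :=
  sInf {s : ℝ | ∃ a : ℝ, s = ∑ x ∈ bdry μ Ω, vm μ Ω x * |f x - a|}

section

variable {μ : V → V → ℝ} {Ω : Finset V}

lemma bdry_subset_clos : bdry μ Ω ⊆ clos μ Ω := subset_union_right

lemma self_subset_clos : Ω ⊆ clos μ Ω := subset_union_left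

lemma vm_nonneg (hnn : ∀ x y, 0 ≤ μ x y) (x : V) : 0 ≤ vm μ Ω x := by
  unfold vm
  split <;> exact sum_nonneg fun y _ => hnn x y

lemma vm_pos_of_mem_bdry (hnn : ∀ x y, 0 ≤ μ x y) {x : V} (hx : x ∈ bdry μ Ω) :
    0 < vm μ Ω x := by
  obtain ⟨-, hxΩ, y, hy, hxy⟩ := mem_filter.1 hx
  rw [vm, if_neg hxΩ]
  exact sum_pos' (fun z _ => hnn x z) ⟨y, hy, hxy⟩

lemma msum_mono (hnn : ∀ x y, 0 ≤ μ x y) {A B : Finset V} (h : A ⊆ B) :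
    msum μ Ω A ≤ msum μ Ω B :=
  sum_le_sum_of_subset_of_nonneg h fun x _ _ => vm_nonneg hnn x

lemma sum_vm_mul_indicator (A : Finset V) :
    ∑ x ∈ bdry μ Ω, vm μ Ω x * (A : Set V).indicator 1 x = msum μ Ω (A ∩ bdry μ Ω) := by
  simp only [Set.indicator_apply, mem_coe, Pi.one_apply, mul_ite, mul_one, mul_zero]
  rw [sum_ite_mem, inter_comm]
  rfl

lemma edgeSum_congr {F G : V → V → ℝ} (h : ∀ x ∈ Ω, ∀ y ∈ clos μ Ω, F x y = G x y) :
    edgeSum μ Ω F = edgeSum μ Ω G := by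
  have hs : ∀ s ⊆ clos μ Ω, ∑ x ∈ Ω, ∑ y ∈ s, μ x y * F x y =
      ∑ x ∈ Ω, ∑ y ∈ s, μ x y * G x y := fun s hs =>
    sum_congr rfl fun x hx => sum_congr rfl fun y hy => by rw [h x hx y (hs hy)]
  rw [edgeSum, edgeSum, hs Ω self_subset_clos, hs _ bdry_subset_clos]

lemma edgeSum_add (F G : V → V → ℝ) :
    edgeSum μ Ω (fun x y => F x y + G x y) = edgeSum μ Ω F + edgeSum μ Ω G := by
  simp only [edgeSum, mul_add, sum_add_distrib]
  ring

lemma edgeSum_const_mul (c : ℝ) (F : V → V → ℝ) :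
    edgeSum μ Ω (fun x y => c * F x y) = c * edgeSum μ Ω F := by
  simp only [edgeSum, mul_left_comm _ c, ← mul_sum]
  ring

lemma edgeSum_nonneg (hnn : ∀ x y, 0 ≤ μ x y) {F : V → V → ℝ} (hF : ∀ x y, 0 ≤ F x y) :
    0 ≤ edgeSum μ Ω F := by
  have h : ∀ s t : Finset V, 0 ≤ ∑ x ∈ s, ∑ y ∈ t, μ x y * F x y := fun s t =>
    sum_nonneg fun x _ => sum_nonneg fun y _ => mul_nonneg (hnn x y) (hF x y)
  exact add_nonneg (div_nonneg (h _ _) zero_le_two) (h _ _)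

lemma cut_nonneg (hnn : ∀ x y, 0 ≤ μ x y) (A : Finset V) : 0 ≤ cut μ Ω A :=
  edgeSum_nonneg hnn fun x y => by split <;> norm_num

lemma hE_nonneg (hnn : ∀ x y, 0 ≤ μ x y) : 0 ≤ hE μ Ω :=
  Real.sInf_nonneg <| by
    rintro _ ⟨A, -, hA, -, rfl⟩
    exact div_nonneg (cut_nonneg hnn A) hA.le

lemma hE_mul_msum_le_cut (hnn : ∀ x y, 0 ≤ μ x y) {A : Finset V} (hA : A ⊆ clos μ Ω)
    (hhalf : msum μ Ω (A ∩ bdry μ Ω) ≤ msum μ Ω (bdry μ Ω) / 2) :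
    hE μ Ω * msum μ Ω (A ∩ bdry μ Ω) ≤ cut μ Ω A := by
  rcases (msum_mono (Ω := Ω) hnn (empty_subset (A ∩ bdry μ Ω))).eq_or_lt with h | hpos
  · rw [← h, msum, sum_empty, mul_zero]
    exact cut_nonneg hnn A
  refine (le_div_iff₀ hpos).1 (csInf_le ⟨0, ?_⟩ ⟨A, hA, hpos, hhalf, rfl⟩)
  rintro _ ⟨B, -, hB, -, rfl⟩
  exact div_nonneg (cut_nonneg hnn B) hB.le

lemma edgeVariation_nonneg (hnn : ∀ x y, 0 ≤ μ x y) (f : V → ℝ) : 0 ≤ edgeVariation μ Ω f :=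
  edgeSum_nonneg hnn fun _ _ => abs_nonneg _

lemma edgeVariation_indicator (A : Finset V) :
    edgeVariation μ Ω ((A : Set V).indicator 1) = cut μ Ω A := by
  unfold edgeVariation cut
  congr 1
  funext x y
  by_cases hx : x ∈ A <;> by_cases hy : y ∈ A <;> simp [hx, hy]

lemma bdryDeviation_le (hnn : ∀ x y, 0 ≤ μ x y) (f : V → ℝ) (a : ℝ) :
    bdryDeviation μ Ω f ≤ ∑ x ∈ bdry μ Ω, vm μ Ω x * |f x - a| := by
  refine csInf_le ⟨0, ?_⟩ ⟨a, rfl⟩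
  rintro _ ⟨b, rfl⟩
  exact sum_nonneg fun x _ => mul_nonneg (vm_nonneg hnn x) (abs_nonneg _)

lemma bdryDeviation_indicator (hnn : ∀ x y, 0 ≤ μ x y) {A : Finset V}
    (hhalf : msum μ Ω (A ∩ bdry μ Ω) ≤ msum μ Ω (bdry μ Ω) / 2) :
    bdryDeviation μ Ω ((A : Set V).indicator 1) = msum μ Ω (A ∩ bdry μ Ω) := by
  set χ : V → ℝ := (A : Set V).indicator 1
  have hχ : ∑ x ∈ bdry μ Ω, vm μ Ω x * χ x = msum μ Ω (A ∩ bdry μ Ω) := sum_vm_mul_indicator A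
  refine le_antisymm ?_ (le_csInf ⟨_, 0, rfl⟩ ?_)
  · calc bdryDeviation μ Ω χ ≤ ∑ x ∈ bdry μ Ω, vm μ Ω x * |χ x - 0| := bdryDeviation_le hnn χ 0
      _ = msum μ Ω (A ∩ bdry μ Ω) := by
        rw [← hχ]
        refine sum_congr rfl fun x _ => ?_
        have hχ₀ : 0 ≤ χ x := Set.indicator_nonneg (fun _ _ => zero_le_one) x
        rw [sub_zero, abs_of_nonneg hχ₀]
  rintro _ ⟨a, rfl⟩
  have hpt : ∀ x, |χ x - a| = χ x * |1 - a| + (1 - χ x) * |a| := fun x => by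
    by_cases hx : x ∈ A <;> simp [χ, hx, abs_sub_comm]
  have hsum : ∑ x ∈ bdry μ Ω, vm μ Ω x * |χ x - a| =
      msum μ Ω (A ∩ bdry μ Ω) * |1 - a| +
        (msum μ Ω (bdry μ Ω) - msum μ Ω (A ∩ bdry μ Ω)) * |a| := by
    simp only [hpt, mul_add, sum_add_distrib, mul_sub, mul_one, sum_sub_distrib,
      ← mul_assoc, ← sum_mul, hχ]
    rfl
  have htri : 1 ≤ |1 - a| + |a| := by simpa using abs_add_le (1 - a) a
  have hm : 0 ≤ msum μ Ω (A ∩ bdry μ Ω) := msum_mono hnn (empty_subset _)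
  rw [hsum]
  nlinarith [mul_le_mul_of_nonneg_left htri hm, mul_nonneg (by linarith : 0 ≤
    msum μ Ω (bdry μ Ω) - 2 * msum μ Ω (A ∩ bdry μ Ω)) (abs_nonneg a)]

lemma sum_bdry_eq_of_lowerLayer {g : V → ℝ} {t : ℝ} {S : Finset V}
    (hlow : ∀ x ∈ clos μ Ω, (t - g x)⁺ = t - t * (S : Set V).indicator 1 x) :
    ∑ x ∈ bdry μ Ω, vm μ Ω x * g x =
      ∑ x ∈ bdry μ Ω, vm μ Ω x * (g x - t)⁺ + t * msum μ Ω (S ∩ bdry μ Ω) := by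
  rw [← sum_vm_mul_indicator, mul_sum, ← sum_add_distrib]
  refine sum_congr rfl fun x hx => ?_
  have h := posPart_sub_negPart (g x - t)
  rw [← posPart_neg, neg_sub, hlow x (bdry_subset_clos hx)] at h
  linear_combination -vm μ Ω x * h

lemma edgeVariation_eq_of_lowerLayer {g : V → ℝ} {t : ℝ} (ht : 0 ≤ t) {S : Finset V}
    (hlow : ∀ x ∈ clos μ Ω, (t - g x)⁺ = t - t * (S : Set V).indicator 1 x) :
    edgeVariation μ Ω g = edgeVariation μ Ω (fun x => (g x - t)⁺) + t * cut μ Ω S := by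
  rw [← edgeVariation_indicator, edgeVariation, edgeVariation, edgeVariation,
    ← edgeSum_const_mul, ← edgeSum_add]
  refine edgeSum_congr fun x hx y hy => ?_
  set χ : V → ℝ := (S : Set V).indicator 1
  rw [abs_sub_eq_posPart_add_posPart (g x) (g y) t, hlow x (self_subset_clos hx), hlow y hy,
    show t - t * χ x - (t - t * χ y) = -(t * (χ x - χ y)) by ring, abs_neg, abs_mul,
    abs_of_nonneg ht]

lemma hE_mul_sum_le_edgeVariation (hnn : ∀ x y, 0 ≤ μ x y) {g : V → ℝ} (hg : ∀ x, 0 ≤ g x)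
    (hhalf : msum μ Ω ((bdry μ Ω).filter (0 < g ·)) ≤ msum μ Ω (bdry μ Ω) / 2) :
    hE μ Ω * ∑ x ∈ bdry μ Ω, vm μ Ω x * g x ≤ edgeVariation μ Ω g := by
  generalize hS : (clos μ Ω).filter (0 < g ·) = S
  induction S using Finset.strongInduction generalizing g with
  | H S ih =>
  have hmemS : ∀ x, x ∈ S ↔ x ∈ clos μ Ω ∧ 0 < g x := fun x => by rw [← hS, mem_filter]
  have hzero : ∀ x ∈ clos μ Ω, x ∉ S → g x = 0 := fun x hx hxS =>
    le_antisymm (not_lt.1 fun h => hxS ((hmemS x).2 ⟨hx, h⟩)) (hg x)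
  rcases S.eq_empty_or_nonempty with rfl | hne
  · rw [sum_eq_zero fun x hx => by rw [hzero x (bdry_subset_clos hx) (notMem_empty x), mul_zero],
      mul_zero]
    exact edgeVariation_nonneg hnn g
  obtain ⟨x₀, hx₀, hmin⟩ := S.exists_min_image g hne
  set t := g x₀
  have ht : 0 < t := ((hmemS x₀).1 hx₀).2
  set g' : V → ℝ := fun x => (g x - t)⁺
  have hlow : ∀ x ∈ clos μ Ω, (t - g x)⁺ = t - t * (S : Set V).indicator 1 x := fun x hx => by
    by_cases hxS : x ∈ S
    · simp [hxS, hmin x hxS]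
    · simp [hxS, hzero x hx hxS, ht.le]
  have hS' : (clos μ Ω).filter (0 < g' ·) ⊂ S := by
    refine ssubset_iff_of_subset (fun x hx => ?_) |>.2 ⟨x₀, hx₀, by simp [g', t]⟩
    obtain ⟨hx, hpos⟩ := mem_filter.1 hx
    exact (hmemS x).2 ⟨hx, ht.trans (sub_pos.1 (posPart_pos_iff.1 hpos))⟩
  have hhalf' : msum μ Ω ((bdry μ Ω).filter (0 < g' ·)) ≤ msum μ Ω (bdry μ Ω) / 2 :=
    (msum_mono hnn (monotone_filter_right _ fun x _ hpos =>
      ht.trans (sub_pos.1 (posPart_pos_iff.1 hpos)))).trans hhalf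
  have hcut : hE μ Ω * msum μ Ω (S ∩ bdry μ Ω) ≤ cut μ Ω S :=
    hE_mul_msum_le_cut hnn (fun x hx => ((hmemS x).1 hx).1) <| (msum_mono hnn fun x hx =>
      mem_filter.2 ⟨(mem_inter.1 hx).2, ((hmemS x).1 (mem_inter.1 hx).1).2⟩).trans hhalf
  calc hE μ Ω * ∑ x ∈ bdry μ Ω, vm μ Ω x * g x
      = hE μ Ω * ∑ x ∈ bdry μ Ω, vm μ Ω x * g' x + t * (hE μ Ω * msum μ Ω (S ∩ bdry μ Ω)) := by
        rw [sum_bdry_eq_of_lowerLayer hlow]; ring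
    _ ≤ edgeVariation μ Ω g' + t * cut μ Ω S :=
        add_le_add (ih _ hS' (fun x => posPart_nonneg _) hhalf' rfl)
          (mul_le_mul_of_nonneg_left hcut ht.le)
    _ = edgeVariation μ Ω g := (edgeVariation_eq_of_lowerLayer ht.le hlow).symm

lemma hE_mul_bdryDeviation_le (hnn : ∀ x y, 0 ≤ μ x y) (f : V → ℝ) :
    hE μ Ω * bdryDeviation μ Ω f ≤ edgeVariation μ Ω f := by
  obtain ⟨c, hc₁, hc₂⟩ := (bdry μ Ω).exists_weighted_median (vm μ Ω) f fun x _ => vm_nonneg hnn x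
  have h₁ : hE μ Ω * ∑ x ∈ bdry μ Ω, vm μ Ω x * (f x - c)⁺ ≤
      edgeVariation μ Ω fun x => (f x - c)⁺ := by
    refine hE_mul_sum_le_edgeVariation hnn (fun x => posPart_nonneg _) ?_
    simpa only [msum, posPart_pos_iff, sub_pos] using hc₁
  have h₂ : hE μ Ω * ∑ x ∈ bdry μ Ω, vm μ Ω x * (c - f x)⁺ ≤
      edgeVariation μ Ω fun x => (c - f x)⁺ := by
    refine hE_mul_sum_le_edgeVariation hnn (fun x => posPart_nonneg _) ?_
    simpa only [msum, posPart_pos_iff, sub_pos] using hc₂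
  have hsum : ∑ x ∈ bdry μ Ω, vm μ Ω x * |f x - c| =
      ∑ x ∈ bdry μ Ω, vm μ Ω x * (f x - c)⁺ + ∑ x ∈ bdry μ Ω, vm μ Ω x * (c - f x)⁺ := by
    rw [← sum_add_distrib]
    refine sum_congr rfl fun x _ => ?_
    rw [← mul_add, ← posPart_add_negPart (f x - c), ← posPart_neg, neg_sub]
  have hedge : edgeVariation μ Ω f =
      edgeVariation μ Ω (fun x => (f x - c)⁺) + edgeVariation μ Ω (fun x => (c - f x)⁺) := by
    rw [edgeVariation, edgeVariation, edgeVariation, ← edgeSum_add]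
    simp only [← abs_sub_eq_posPart_add_posPart]
  calc hE μ Ω * bdryDeviation μ Ω f
      ≤ hE μ Ω * ∑ x ∈ bdry μ Ω, vm μ Ω x * |f x - c| :=
        mul_le_mul_of_nonneg_left (bdryDeviation_le hnn f c) (hE_nonneg hnn)
    _ ≤ edgeVariation μ Ω f := by rw [hsum, mul_add, hedge]; exact add_le_add h₁ h₂

lemma exists_admissible_of_bdryDeviation_pos (hnn : ∀ x y, 0 ≤ μ x y) {f : V → ℝ}
    (hf : 0 < bdryDeviation μ Ω f) :
    ∃ A, A ⊆ clos μ Ω ∧ 0 < msum μ Ω (A ∩ bdry μ Ω) ∧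
      msum μ Ω (A ∩ bdry μ Ω) ≤ msum μ Ω (bdry μ Ω) / 2 := by
  obtain ⟨z, hz, w, hw, hzw⟩ : ∃ z ∈ bdry μ Ω, ∃ w ∈ bdry μ Ω, z ≠ w := by
    by_contra! h
    rcases (bdry μ Ω).eq_empty_or_nonempty with he | ⟨z, hz⟩
    · have := bdryDeviation_le (Ω := Ω) hnn f 0
      rw [he, sum_empty] at this
      linarith
    · have := bdryDeviation_le (Ω := Ω) hnn f (f z)
      rw [sum_eq_zero fun x hx => by rw [h x hx z hz, sub_self, abs_zero, mul_zero]] at this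
      linarith
  wlog hle : vm μ Ω z ≤ vm μ Ω w generalizing z w
  · exact this w hw z hz hzw.symm (le_of_not_ge hle)
  have hz' : msum μ Ω ({z} ∩ bdry μ Ω) = vm μ Ω z := by
    rw [singleton_inter_of_mem hz, msum, sum_singleton]
  refine ⟨{z}, singleton_subset_iff.2 (bdry_subset_clos hz), ?_, ?_⟩ <;> rw [hz']
  · exact vm_pos_of_mem_bdry hnn hz
  · have := msum_mono (Ω := Ω) hnn (insert_subset hz (singleton_subset_iff.2 hw))
    rw [msum, sum_pair hzw] at this
    linarith

end

theorem Real.sInf_eq_sInf_of_subset {S R : Set ℝ} (hR : BddBelow R) (hSR : S ⊆ R)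
    (hle : ∀ r ∈ R, sInf S ≤ r) (hne : R.Nonempty → S.Nonempty) : sInf S = sInf R := by
  rcases S.eq_empty_or_nonempty with rfl | hS
  · rw [Set.not_nonempty_iff_eq_empty.1 (mt hne Set.not_nonempty_empty)]
  exact le_antisymm (le_csInf (hS.mono hSR) hle) (csInf_le_csInf hR hS hSR)

theorem stmt_0_general (μ : V → V → ℝ) (Ω : Finset V)
    (hnn : ∀ x y, 0 ≤ μ x y) :
    hE μ Ω = sInf { r : ℝ | ∃ f : V → ℝ,
      0 < sInf { s : ℝ | ∃ a : ℝ, s = ∑ x ∈ bdry μ Ω, vm μ Ω x * |f x - a| } ∧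
      r = edgeSum μ Ω (fun x y => |f x - f y|) /
            sInf { s : ℝ | ∃ a : ℝ, s = ∑ x ∈ bdry μ Ω, vm μ Ω x * |f x - a| } } := by
  change hE μ Ω = sInf {r : ℝ | ∃ f : V → ℝ, 0 < bdryDeviation μ Ω f ∧
    r = edgeVariation μ Ω f / bdryDeviation μ Ω f}
  refine Real.sInf_eq_sInf_of_subset ?_ ?_ ?_ ?_
  · refine ⟨0, ?_⟩
    rintro _ ⟨f, hf, rfl⟩
    exact div_nonneg (edgeVariation_nonneg hnn f) hf.le
  · rintro _ ⟨A, -, hpos, hhalf, rfl⟩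
    refine ⟨(A : Set V).indicator 1, ?_, ?_⟩ <;>
      rw [bdryDeviation_indicator hnn hhalf]
    exacts [hpos, by rw [edgeVariation_indicator]]
  · rintro _ ⟨f, hf, rfl⟩
    exact (le_div_iff₀ hf).2 (hE_mul_bdryDeviation_le hnn f)
  · rintro ⟨_, f, hf, rfl⟩
    obtain ⟨A, hA, hpos, hhalf⟩ := exists_admissible_of_bdryDeviation_pos hnn hf
    exact ⟨_, A, hA, hpos, hhalf, rfl⟩

/-- Theorem 1.2 (Escobar-type Cheeger constant equals the Sobolev-type constant):
h_E(Ω̃) is the infimum, over functions f on Ω̄ for which the denominator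
inf_{a ∈ ℝ} Σ_{x∈δΩ} m_x |f(x) − a| is nonzero, of
(Σ_{e={x,y}∈E(Ω,Ω̄)} μ_{xy} |f(x) − f(y)|) / (inf_{a∈ℝ} Σ_{x∈δΩ} m_x |f(x) − a|). -/
theorem stmt_0 (μ : V → V → ℝ) (Ω : Finset V)
    (hsym : ∀ x y, μ x y = μ y x) (hnn : ∀ x y, 0 ≤ μ x y)
    (hconn : TilConnected μ Ω) :
    hE μ Ω = sInf { r : ℝ | ∃ f : V → ℝ,
      0 < sInf { s : ℝ | ∃ a : ℝ, s = ∑ x ∈ bdry μ Ω, vm μ Ω x * |f x - a| } ∧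
      r = edgeSum μ Ω (fun x y => |f x - f y|) /
            sInf { s : ℝ | ∃ a : ℝ, s = ∑ x ∈ bdry μ Ω, vm μ Ω x * |f x - a| } } :=
  stmt_0_general μ Ω hnn
end

section
/- Let G be a finite graph with symmetric edge weights and Ω a finite subset of vertices with at least two boundary vertices. Then λ_1(Ω) ≥ (1/8) ζ_1(Ω̃)², where λ_1(Ω) is the first nontrivial eigenvalue of the Dirichlet-to-Neumann operator on δΩ and ζ_1(Ω̃) is the first nontrivial eigenvalue of the normalized graph Laplacian on the graph Ω̃ (with no boundary condition). -/
open scoped Classical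
open Finset

variable {V : Type*} [Fintype V]

/-- ζ₁(Ω̃): the first nontrivial eigenvalue of the normalized Laplacian of Ω̃
(no boundary condition), via its Rayleigh quotient. -/
noncomputable def zeta1 (μ : V → V → ℝ) (Ω : Finset V) : ℝ :=
  sInf { r : ℝ | ∃ f : V → ℝ, (∃ x ∈ clos μ Ω, f x ≠ 0) ∧
    (∑ x ∈ clos μ Ω, f x * vm μ Ω x) = 0 ∧
    r = dirichlet μ Ω f / ∑ x ∈ clos μ Ω, f x ^ 2 * vm μ Ω x }

/-!
The proof gives `λ₁(Ω) ≥ ζ₁(Ω̃)`, which suffices because `0 ≤ ζ₁ ≤ 2` (from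
`(f x - f y)² ≤ 2 f(x)² + 2 f(y)²`) gives `ζ₁² ≤ 2 ζ₁`. For `λ₁ ≥ ζ₁`, an admissible function for
`λ₁`, centred to mean zero on `Ω̄`, is a test function for `ζ₁` with the same energy and with norm
at least its boundary norm `1`. Connectivity of `Ω̃` makes the Dirichlet problem on `Ω` uniquely
solvable, so admissible functions for `λ₁` exist.
-/

section

variable {μ : V → V → ℝ} {Ω : Finset V}

lemma mem_bdry {x : V} : x ∈ bdry μ Ω ↔ x ∉ Ω ∧ ∃ y ∈ Ω, 0 < μ x y := by
  simp [bdry]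

lemma disjoint_bdry : Disjoint Ω (bdry μ Ω) :=
  disjoint_left.mpr fun _ hx hxb => (mem_bdry.mp hxb).1 hx

lemma edgeSum_mono (hnn : ∀ x y, 0 ≤ μ x y) {F G : V → V → ℝ} (hFG : ∀ x y, F x y ≤ G x y) :
    edgeSum μ Ω F ≤ edgeSum μ Ω G := by
  unfold edgeSum
  have h : ∀ s t : Finset V, ∑ x ∈ s, ∑ y ∈ t, μ x y * F x y ≤ ∑ x ∈ s, ∑ y ∈ t, μ x y * G x y :=
    fun s t => sum_le_sum fun x _ => sum_le_sum fun y _ =>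
      mul_le_mul_of_nonneg_left (hFG x y) (hnn x y)
  linarith [h Ω Ω, h Ω (bdry μ Ω)]

/-- Each edge of `E(Ω, Ω̄)` charges `g` at both ends; a vertex `x ∈ Ω̄` is charged at most
`m_x` times. -/
lemma edgeSum_add_le (hsym : ∀ x y, μ x y = μ y x) (hnn : ∀ x y, 0 ≤ μ x y)
    {g : V → ℝ} (hg : ∀ x, 0 ≤ g x) :
    edgeSum μ Ω (fun x y => g x + g y) ≤ ∑ x ∈ clos μ Ω, g x * vm μ Ω x := by
  have hΩΩ : ∑ x ∈ Ω, ∑ y ∈ Ω, μ x y * (g x + g y) = 2 * ∑ x ∈ Ω, g x * ∑ y ∈ Ω, μ x y := by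
    have hswap : ∑ x ∈ Ω, ∑ y ∈ Ω, μ x y * g y = ∑ x ∈ Ω, ∑ y ∈ Ω, μ x y * g x := by
      rw [sum_comm]
      simp only [hsym]
    simp only [mul_add, sum_add_distrib, hswap, mul_sum, mul_comm (g _) (μ _ _), two_mul]
  have hΩb : ∑ x ∈ Ω, ∑ y ∈ bdry μ Ω, μ x y * (g x + g y) =
      ∑ x ∈ Ω, g x * ∑ y ∈ bdry μ Ω, μ x y + ∑ y ∈ bdry μ Ω, g y * vm μ Ω y := by
    have hvmb : ∀ y ∈ bdry μ Ω, ∑ x ∈ Ω, μ x y * g y = g y * vm μ Ω y := fun y hy => by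
      rw [vm, if_neg (mem_bdry.mp hy).1, mul_sum]
      exact sum_congr rfl fun x _ => by rw [hsym]; ring
    simp only [mul_add, sum_add_distrib]
    congr 1
    · simp only [mul_sum, mul_comm (g _) (μ _ _)]
    · rw [sum_comm]
      exact sum_congr rfl hvmb
  have hvm : ∀ x ∈ Ω, ∑ y ∈ Ω, μ x y + ∑ y ∈ bdry μ Ω, μ x y ≤ vm μ Ω x := by
    intro x hx
    rw [vm, if_pos hx, ← sum_union disjoint_bdry]
    exact sum_le_sum_of_subset_of_nonneg (subset_univ _) fun y _ _ => hnn x y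
  calc edgeSum μ Ω (fun x y => g x + g y)
      = ∑ x ∈ Ω, g x * (∑ y ∈ Ω, μ x y + ∑ y ∈ bdry μ Ω, μ x y) +
          ∑ y ∈ bdry μ Ω, g y * vm μ Ω y := by
        rw [edgeSum, hΩΩ, hΩb]
        simp only [mul_add, sum_add_distrib]
        ring
    _ ≤ ∑ x ∈ Ω, g x * vm μ Ω x + ∑ y ∈ bdry μ Ω, g y * vm μ Ω y := by
        gcongr with x hx
        exacts [hg x, hvm x hx]
    _ = ∑ x ∈ clos μ Ω, g x * vm μ Ω x := (sum_union disjoint_bdry).symm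

lemma dirichlet_nonneg (hnn : ∀ x y, 0 ≤ μ x y) (f : V → ℝ) : 0 ≤ dirichlet μ Ω f :=
  edgeSum_nonneg hnn fun _ _ => sq_nonneg _

lemma dirichlet_sub_const (f : V → ℝ) (c : ℝ) :
    dirichlet μ Ω (fun x => f x - c) = dirichlet μ Ω f := by
  simp only [dirichlet, sub_sub_sub_cancel_right]

lemma dirichlet_le_two_mul (hsym : ∀ x y, μ x y = μ y x) (hnn : ∀ x y, 0 ≤ μ x y)
    (f : V → ℝ) : dirichlet μ Ω f ≤ 2 * ∑ x ∈ clos μ Ω, f x ^ 2 * vm μ Ω x :=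
  calc dirichlet μ Ω f
      ≤ edgeSum μ Ω (fun x y => 2 * f x ^ 2 + 2 * f y ^ 2) :=
        edgeSum_mono hnn fun x y => by nlinarith [sq_nonneg (f x + f y)]
    _ ≤ ∑ x ∈ clos μ Ω, 2 * f x ^ 2 * vm μ Ω x :=
        edgeSum_add_le hsym hnn fun x => by positivity
    _ = 2 * ∑ x ∈ clos μ Ω, f x ^ 2 * vm μ Ω x := by
        rw [mul_sum]
        simp only [mul_assoc]

lemma dirichlet_div_nonneg (hnn : ∀ x y, 0 ≤ μ x y) (f : V → ℝ) :
    0 ≤ dirichlet μ Ω f / ∑ x ∈ clos μ Ω, f x ^ 2 * vm μ Ω x :=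
  div_nonneg (dirichlet_nonneg hnn f)
    (sum_nonneg fun x _ => mul_nonneg (sq_nonneg _) (vm_nonneg hnn x))

lemma dirichlet_div_le_two (hsym : ∀ x y, μ x y = μ y x) (hnn : ∀ x y, 0 ≤ μ x y)
    (f : V → ℝ) : dirichlet μ Ω f / ∑ x ∈ clos μ Ω, f x ^ 2 * vm μ Ω x ≤ 2 :=
  div_le_of_le_mul₀ (sum_nonneg fun x _ => mul_nonneg (sq_nonneg _) (vm_nonneg hnn x))
    zero_le_two (dirichlet_le_two_mul hsym hnn f)

lemma zeta1_nonneg (hnn : ∀ x y, 0 ≤ μ x y) : 0 ≤ zeta1 μ Ω :=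
  Real.sInf_nonneg <| by
    rintro r ⟨f, -, -, rfl⟩
    exact dirichlet_div_nonneg hnn f

/-- `sInf ≤ sSup` also covers the case without admissible `f`, where `zeta1 = sInf ∅ = 0`. -/
lemma zeta1_le_two (hsym : ∀ x y, μ x y = μ y x) (hnn : ∀ x y, 0 ≤ μ x y) :
    zeta1 μ Ω ≤ 2 := by
  have hle : ∀ r ∈ {r : ℝ | ∃ f : V → ℝ, (∃ x ∈ clos μ Ω, f x ≠ 0) ∧
      (∑ x ∈ clos μ Ω, f x * vm μ Ω x) = 0 ∧
      r = dirichlet μ Ω f / ∑ x ∈ clos μ Ω, f x ^ 2 * vm μ Ω x}, r ≤ 2 := by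
    rintro r ⟨f, -, -, rfl⟩
    exact dirichlet_div_le_two hsym hnn f
  refine (Real.sInf_le_sSup _ ⟨0, ?_⟩ ⟨2, hle⟩).trans (Real.sSup_le hle zero_le_two)
  rintro r ⟨f, -, -, rfl⟩
  exact dirichlet_div_nonneg hnn f

lemma zeta1_le_rayleigh (hnn : ∀ x y, 0 ≤ μ x y) {f : V → ℝ}
    (hf : ∃ x ∈ clos μ Ω, f x ≠ 0) (hmean : ∑ x ∈ clos μ Ω, f x * vm μ Ω x = 0) :
    zeta1 μ Ω ≤ dirichlet μ Ω f / ∑ x ∈ clos μ Ω, f x ^ 2 * vm μ Ω x := by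
  refine csInf_le ⟨0, ?_⟩ ⟨f, hf, hmean, rfl⟩
  rintro r ⟨g, -, -, rfl⟩
  exact dirichlet_div_nonneg hnn g

lemma zeta1_le_dirichlet (hnn : ∀ x y, 0 ≤ μ x y) {w : V → ℝ}
    (hw₁ : ∑ x ∈ bdry μ Ω, w x ^ 2 * vm μ Ω x = 1) (hw₀ : ∑ x ∈ bdry μ Ω, w x * vm μ Ω x = 0) :
    zeta1 μ Ω ≤ dirichlet μ Ω w := by
  set M := ∑ x ∈ clos μ Ω, vm μ Ω x
  set t := (∑ x ∈ clos μ Ω, w x * vm μ Ω x) / M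
  set f : V → ℝ := fun x => w x - t
  have hM : M ≠ 0 := by
    obtain ⟨z, hz, hwz⟩ := exists_ne_zero_of_sum_ne_zero (hw₁.trans_ne one_ne_zero)
    have hmz : 0 < vm μ Ω z := (vm_nonneg hnn z).lt_of_ne' (right_ne_zero_of_mul hwz)
    exact (hmz.trans_le (single_le_sum (fun x _ => vm_nonneg hnn x)
      (bdry_subset_clos hz))).ne'
  have hmean : ∑ x ∈ clos μ Ω, f x * vm μ Ω x = 0 := by
    simp only [f, sub_mul, sum_sub_distrib, ← mul_sum]
    exact sub_eq_zero.mpr (div_mul_cancel₀ _ hM).symm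
  have hbdry : 1 ≤ ∑ x ∈ bdry μ Ω, f x ^ 2 * vm μ Ω x := by
    have hexp : ∀ x, f x ^ 2 * vm μ Ω x =
        w x ^ 2 * vm μ Ω x - 2 * t * (w x * vm μ Ω x) + t ^ 2 * vm μ Ω x := fun x => by ring
    simp only [hexp, sum_add_distrib, sum_sub_distrib, ← mul_sum, hw₁, hw₀]
    have hmb : 0 ≤ ∑ x ∈ bdry μ Ω, vm μ Ω x := sum_nonneg fun x _ => vm_nonneg hnn x
    nlinarith [sq_nonneg t]
  have hdenom : 1 ≤ ∑ x ∈ clos μ Ω, f x ^ 2 * vm μ Ω x :=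
    hbdry.trans <| sum_le_sum_of_subset_of_nonneg bdry_subset_clos fun x _ _ =>
      mul_nonneg (sq_nonneg _) (vm_nonneg hnn x)
  have hf : ∃ x ∈ clos μ Ω, f x ≠ 0 := by
    obtain ⟨x, hx, hfx⟩ := exists_ne_zero_of_sum_ne_zero (one_pos.trans_le hdenom).ne'
    exact ⟨x, hx, fun h => hfx (by rw [h]; ring)⟩
  calc zeta1 μ Ω ≤ dirichlet μ Ω f / ∑ x ∈ clos μ Ω, f x ^ 2 * vm μ Ω x :=
        zeta1_le_rayleigh hnn hf hmean
    _ ≤ dirichlet μ Ω w := by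
        rw [dirichlet_sub_const]
        exact div_le_self (dirichlet_nonneg hnn w) hdenom

lemma sum_sum_mul_sq_sub (hsym : ∀ x y, μ x y = μ y x) (f : V → ℝ) :
    ∑ x, ∑ y, μ x y * (f x - f y) ^ 2 = 2 * ∑ x, f x * ∑ y, μ x y * (f x - f y) := by
  have hswap : ∑ x, ∑ y, μ x y * (f y * (f x - f y)) =
      -∑ x, ∑ y, μ x y * (f x * (f x - f y)) := by
    rw [sum_comm, ← sum_neg_distrib]
    refine sum_congr rfl fun x _ => ?_
    rw [← sum_neg_distrib]
    exact sum_congr rfl fun y _ => by rw [hsym]; ring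
  calc ∑ x, ∑ y, μ x y * (f x - f y) ^ 2
      = ∑ x, ∑ y, μ x y * (f x * (f x - f y)) - ∑ x, ∑ y, μ x y * (f y * (f x - f y)) := by
        rw [← sum_sub_distrib]
        refine sum_congr rfl fun x _ => ?_
        rw [← sum_sub_distrib]
        exact sum_congr rfl fun y _ => by ring
    _ = 2 * ∑ x, f x * ∑ y, μ x y * (f x - f y) := by
        rw [hswap, sub_neg_eq_add, ← two_mul]
        simp only [mul_sum, mul_left_comm (f _)]

variable (μ Ω) in
/-- The Dirichlet problem on `Ω` as a square linear system on `V → ℝ`: the numerator of the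
Laplacian on `Ω`, the prescribed values off `Ω`. -/
noncomputable def dirichletProblem : (V → ℝ) →ₗ[ℝ] V → ℝ where
  toFun f x := if x ∈ Ω then ∑ y, μ x y * (f y - f x) else f x
  map_add' f g := by
    ext x
    simp only [Pi.add_apply]
    split_ifs
    · rw [← sum_add_distrib]
      exact sum_congr rfl fun y _ => by ring
    · rfl
  map_smul' c f := by
    ext x
    simp only [Pi.smul_apply, smul_eq_mul, RingHom.id_apply]
    split_ifs
    · rw [mul_sum]
      exact sum_congr rfl fun y _ => by ring
    · rfl

/-- A solution with zero data has zero energy, hence is constant along the edges of `Ω̃`,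
hence equal to its value `0` at a boundary vertex. -/
lemma dirichletProblem_injective (hsym : ∀ x y, μ x y = μ y x) (hnn : ∀ x y, 0 ≤ μ x y)
    (hconn : TilConnected μ Ω) (hne : (bdry μ Ω).Nonempty) :
    Function.Injective (dirichletProblem μ Ω) := by
  rw [← LinearMap.ker_eq_bot, LinearMap.ker_eq_bot']
  intro f hf
  have hout : ∀ x ∉ Ω, f x = 0 := fun x hx => by
    simpa [dirichletProblem, hx] using congrFun hf x
  have hin : ∀ x ∈ Ω, ∑ y, μ x y * (f y - f x) = 0 := fun x hx => by
    simpa [dirichletProblem, hx] using congrFun hf x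
  have henergy : ∑ x, ∑ y, μ x y * (f x - f y) ^ 2 = 0 := by
    rw [sum_sum_mul_sq_sub hsym, sum_eq_zero, mul_zero]
    intro x _
    by_cases hx : x ∈ Ω
    · rw [← neg_eq_zero, ← mul_neg, ← sum_neg_distrib]
      simp only [← mul_neg, neg_sub, hin x hx, mul_zero]
    · rw [hout x hx, zero_mul]
  have hedge : ∀ x y, tilAdj μ Ω x y → f x = f y := by
    rintro x y ⟨hμ, -⟩
    have hterm := (Fintype.sum_eq_zero_iff_of_nonneg fun _ =>
      sum_nonneg fun y _ => mul_nonneg (hnn _ y) (sq_nonneg _)).mp henergy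
    have h := (Fintype.sum_eq_zero_iff_of_nonneg fun y =>
      mul_nonneg (hnn x y) (sq_nonneg _)).mp (congrFun hterm x)
    simpa only [Pi.zero_apply, mul_eq_zero, hμ.ne', false_or, pow_eq_zero_iff two_ne_zero,
      sub_eq_zero] using congrFun h y
  obtain ⟨z, hz⟩ := hne
  ext x
  by_cases hx : x ∈ Ω
  · have hpath := hconn x (subset_union_left hx) z (bdry_subset_clos hz)
    have : f x = f z := by simpa [Relation.reflTransGen_eq_self] using hpath.lift f hedge
    rw [Pi.zero_apply, this, hout z (mem_bdry.mp hz).1]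
  · exact hout x hx

lemma exists_isHarmonic_eq_of_notMem (hsym : ∀ x y, μ x y = μ y x) (hnn : ∀ x y, 0 ≤ μ x y)
    (hconn : TilConnected μ Ω) (hne : (bdry μ Ω).Nonempty) (φ : V → ℝ) :
    ∃ u : V → ℝ, IsHarmonic μ Ω u ∧ ∀ z ∉ Ω, u z = φ z := by
  obtain ⟨u, hu⟩ := LinearMap.injective_iff_surjective.mp
    (dirichletProblem_injective hsym hnn hconn hne) fun x => if x ∈ Ω then 0 else φ x
  refine ⟨u, fun x hx => ?_, fun z hz => by simpa [dirichletProblem, hz] using congrFun hu z⟩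
  have h := congrFun hu x
  simp only [dirichletProblem, LinearMap.coe_mk, AddHom.coe_mk, if_pos hx] at h
  rw [lap, h, zero_div]

lemma exists_bdry_normalized (hnn : ∀ x y, 0 ≤ μ x y) (hcard : 2 ≤ (bdry μ Ω).card) :
    ∃ φ : V → ℝ, ∑ x ∈ bdry μ Ω, φ x ^ 2 * vm μ Ω x = 1 ∧
      ∑ x ∈ bdry μ Ω, φ x * vm μ Ω x = 0 := by
  obtain ⟨z₁, hz₁, z₂, hz₂, hne⟩ := one_lt_card.mp hcard
  set ψ : V → ℝ := fun x =>
    (if x = z₁ then vm μ Ω z₂ else 0) - (if x = z₂ then vm μ Ω z₁ else 0)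
  have hψ₀ : ∑ x ∈ bdry μ Ω, ψ x * vm μ Ω x = 0 := by
    simp only [ψ, sub_mul, ite_mul, zero_mul, sum_sub_distrib, sum_ite_eq', if_pos hz₁,
      if_pos hz₂]
    ring
  set s := ∑ x ∈ bdry μ Ω, ψ x ^ 2 * vm μ Ω x
  have hs : 0 < s := by
    refine sum_pos' (fun x _ => mul_nonneg (sq_nonneg _) (vm_nonneg hnn x)) ⟨z₁, hz₁, ?_⟩
    have := vm_pos_of_mem_bdry hnn hz₂
    simp only [ψ, if_neg hne, sub_zero]
    exact mul_pos (pow_pos this 2) (vm_pos_of_mem_bdry hnn hz₁)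
  refine ⟨fun x => ψ x / √s, ?_, ?_⟩
  · simp only [div_pow, Real.sq_sqrt hs.le, div_mul_eq_mul_div, ← sum_div]
    exact div_self hs.ne'
  · simp only [div_mul_eq_mul_div, ← sum_div, hψ₀, zero_div]

lemma zeta1_le_lambda1 (hsym : ∀ x y, μ x y = μ y x) (hnn : ∀ x y, 0 ≤ μ x y)
    (hconn : TilConnected μ Ω) (hcard : 2 ≤ (bdry μ Ω).card) :
    zeta1 μ Ω ≤ lambda1 μ Ω := by
  obtain ⟨φ, hφ₁, hφ₀⟩ := exists_bdry_normalized hnn hcard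
  obtain ⟨u, hu, huφ⟩ :=
    exists_isHarmonic_eq_of_notMem hsym hnn hconn (card_pos.mp (by omega)) φ
  have hbdry : ∀ g : ℝ → ℝ, ∑ x ∈ bdry μ Ω, g (u x) * vm μ Ω x =
      ∑ x ∈ bdry μ Ω, g (φ x) * vm μ Ω x := fun g =>
    sum_congr rfl fun x hx => by rw [huφ x (mem_bdry.mp hx).1]
  refine le_csInf ⟨_, u, hu, ?_, ?_, rfl⟩ ?_
  · exact (hbdry (· ^ 2)).trans hφ₁
  · exact (hbdry id).trans hφ₀
  · rintro r ⟨w, -, hw₁, hw₀, rfl⟩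
    exact zeta1_le_dirichlet hnn hw₁ hw₀

end

/-- Corollary 1.7: λ₁(Ω) ≥ (1/8) ζ₁(Ω̃)². -/
theorem stmt_3 (μ : V → V → ℝ) (Ω : Finset V)
    (hsym : ∀ x y, μ x y = μ y x) (hnn : ∀ x y, 0 ≤ μ x y)
    (hconn : TilConnected μ Ω) (hcard : 2 ≤ (bdry μ Ω).card) :
    lambda1 μ Ω ≥ (1 / 8) * zeta1 μ Ω ^ 2 := by
  have h₀ : 0 ≤ zeta1 μ Ω := zeta1_nonneg hnn
  have h₂ : zeta1 μ Ω ≤ 2 := zeta1_le_two hsym hnn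
  have hle : zeta1 μ Ω ≤ lambda1 μ Ω := zeta1_le_lambda1 hsym hnn hconn hcard
  nlinarith
end

section
/- Let G be a finite graph with symmetric edge weights and Ω a finite subset of vertices. For y ∈ δΩ let P(·,y) : Ω̄ → ℝ be the harmonic extension of the boundary function (1/m_y)δ_y (the Poisson kernel). Define μ̃_{xy} = Σ_{z∈Ω} μ_{xz} P(z,y) m_y for x, y ∈ δΩ. Then the Dirichlet-to-Neumann operator can be written as Λφ(x) = (1/m_x) Σ_{y∈δΩ} μ̃_{xy} (φ(x) − φ(y)) for all φ : δΩ → ℝ and x ∈ δΩ, and moreover Σ_{y∈δΩ} μ̃_{xy} = m_x for all x ∈ δΩ. -/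
open scoped Classical
open Finset

variable {V : Type*} [Fintype V]

/-!
By the weak maximum principle on the connected graph `Ω̃`, a function harmonic on `Ω` is determined
on `Ω̄` by its boundary values, so every harmonic `u` equals `Σ_{y ∈ δΩ} m_y u(y) P(·, y)` on `Ω̄`.
For `u ≡ 1` this gives `Σ_y m_y P(z, y) = 1`, hence `Σ_y μ̃_{xy} = Σ_{z ∈ Ω} μ_{xz} = m_x`;
inserting the representation into the normal derivative and swapping the two sums gives the
formula for `Λ`.
-/

section DirichletToNeumann

variable {μ : V → V → ℝ} {Ω : Finset V}

lemma notMem_of_mem_bdry {x : V} (hx : x ∈ bdry μ Ω) : x ∉ Ω :=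
  (Finset.mem_filter.mp hx).2.1

lemma vm_eq_sum_of_mem_bdry {x : V} (hx : x ∈ bdry μ Ω) : vm μ Ω x = ∑ z ∈ Ω, μ x z := by
  simp [vm, notMem_of_mem_bdry hx]

lemma vm_pos_of_mem_of_pos (hnn : ∀ x y, 0 ≤ μ x y) {x y : V} (hx : x ∈ Ω)
    (hxy : 0 < μ x y) : 0 < vm μ Ω x := by
  rw [vm, if_pos hx]
  exact hxy.trans_le (Finset.single_le_sum (fun z _ => hnn x z) (Finset.mem_univ y))

lemma mem_clos_of_pos (hsym : ∀ x y, μ x y = μ y x) {x y : V} (hx : x ∈ Ω)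
    (hxy : 0 < μ x y) : y ∈ clos μ Ω := by
  by_cases hy : y ∈ Ω
  · exact Finset.mem_union_left _ hy
  · exact Finset.mem_union_right _ <|
      Finset.mem_filter.mpr ⟨Finset.mem_univ y, hy, x, hx, by rwa [hsym]⟩

lemma mem_bdry_of_mem_clos_of_notMem {x : V} (hx : x ∈ clos μ Ω) (hxΩ : x ∉ Ω) :
    x ∈ bdry μ Ω :=
  (Finset.mem_union.mp hx).resolve_left hxΩ

lemma lap_sub (f g : V → ℝ) (x : V) :
    lap μ Ω (fun z => f z - g z) x = lap μ Ω f x - lap μ Ω g x := by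
  simp only [lap, ← sub_div, ← Finset.sum_sub_distrib]
  congr 1
  exact Finset.sum_congr rfl fun _ _ => by ring

lemma lap_sum_mul (B : Finset V) (c : V → ℝ) (P : V → V → ℝ) (x : V) :
    lap μ Ω (fun z => ∑ y ∈ B, c y * P z y) x = ∑ y ∈ B, c y * lap μ Ω (fun z => P z y) x := by
  simp only [lap, Finset.mul_sum, mul_div_assoc', ← Finset.sum_div]
  rw [Finset.sum_comm]
  congr 1
  refine Finset.sum_congr rfl fun y _ => ?_
  rw [← Finset.sum_sub_distrib, Finset.mul_sum]
  exact Finset.sum_congr rfl fun _ _ => by ring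

lemma isHarmonic_const (c : ℝ) : IsHarmonic μ Ω fun _ => c := by
  intro x _
  simp [lap]

lemma IsHarmonic.sub {f g : V → ℝ} (hf : IsHarmonic μ Ω f) (hg : IsHarmonic μ Ω g) :
    IsHarmonic μ Ω fun z => f z - g z := by
  intro x hx
  rw [lap_sub, hf x hx, hg x hx, sub_zero]

lemma IsHarmonic.sum_mul {B : Finset V} {P : V → V → ℝ}
    (hP : ∀ y ∈ B, IsHarmonic μ Ω fun z => P z y) (c : V → ℝ) :
    IsHarmonic μ Ω fun z => ∑ y ∈ B, c y * P z y := by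
  intro x hx
  rw [lap_sum_mul]
  exact Finset.sum_eq_zero fun y hy => by rw [hP y hy x hx, mul_zero]

lemma IsHarmonic.eq_of_forall_le_of_pos (hsym : ∀ x y, μ x y = μ y x) (hnn : ∀ x y, 0 ≤ μ x y)
    {u : V → ℝ} (hu : IsHarmonic μ Ω u) {p q : V} (hp : p ∈ Ω)
    (hmax : ∀ t ∈ clos μ Ω, u t ≤ u p) (hpq : 0 < μ p q) : u q = u p := by
  have hsum : ∑ t, μ p t * (u t - u p) = 0 :=
    (div_eq_zero_iff.mp (hu p hp)).resolve_right (vm_pos_of_mem_of_pos hnn hp hpq).ne'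
  have hterm_nonpos : ∀ t ∈ Finset.univ, μ p t * (u t - u p) ≤ 0 := by
    intro t _
    rcases (hnn p t).eq_or_lt with h0 | hpos
    · simp [← h0]
    · exact mul_nonpos_of_nonneg_of_nonpos (hnn p t)
        (sub_nonpos.mpr (hmax t (mem_clos_of_pos hsym hp hpos)))
  have hq := (Finset.sum_eq_zero_iff_of_nonpos hterm_nonpos).mp hsum q (Finset.mem_univ q)
  linarith [(mul_eq_zero.mp hq).resolve_left hpq.ne']

theorem IsHarmonic.exists_mem_bdry_forall_le (hsym : ∀ x y, μ x y = μ y x)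
    (hnn : ∀ x y, 0 ≤ μ x y) (hconn : TilConnected μ Ω) {u : V → ℝ}
    (hu : IsHarmonic μ Ω u) (hb : (bdry μ Ω).Nonempty) :
    ∃ b ∈ bdry μ Ω, ∀ z ∈ clos μ Ω, u z ≤ u b := by
  obtain ⟨b₀, hb₀⟩ := hb
  have hb₀c : b₀ ∈ clos μ Ω := Finset.mem_union_right _ hb₀
  obtain ⟨x₀, hx₀, hmax⟩ := (clos μ Ω).exists_max_image u ⟨b₀, hb₀c⟩
  by_contra! hlt
  have hbdry_lt : ∀ b ∈ bdry μ Ω, u b < u x₀ := fun b hb => by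
    obtain ⟨z, hz, hbz⟩ := hlt b hb
    exact hbz.trans_le (hmax z hz)
  -- the maximum propagates along paths of `Ω̃` until it reaches the boundary
  have hreach : ∀ y, Relation.ReflTransGen (tilAdj μ Ω) x₀ y → y ∈ clos μ Ω ∧ u y = u x₀ := by
    intro y hy
    induction hy with
    | refl => exact ⟨hx₀, rfl⟩
    | @tail p _ _ hpq ih =>
      obtain ⟨hpc, hp⟩ := ih
      have hpΩ : p ∈ Ω := by
        by_contra hpΩ
        exact (hbdry_lt _ (mem_bdry_of_mem_clos_of_notMem hpc hpΩ)).ne hp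
      refine ⟨mem_clos_of_pos hsym hpΩ hpq.1, ?_⟩
      rw [hu.eq_of_forall_le_of_pos hsym hnn hpΩ (hp ▸ hmax) hpq.1, hp]
  exact (hbdry_lt b₀ hb₀).ne (hreach b₀ (hconn x₀ hx₀ b₀ hb₀c)).2

theorem IsHarmonic.le_on_clos (hsym : ∀ x y, μ x y = μ y x) (hnn : ∀ x y, 0 ≤ μ x y)
    (hconn : TilConnected μ Ω) (hb : (bdry μ Ω).Nonempty) {u v : V → ℝ}
    (hu : IsHarmonic μ Ω u) (hv : IsHarmonic μ Ω v) (hle : ∀ z ∈ bdry μ Ω, u z ≤ v z) :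
    ∀ z ∈ clos μ Ω, u z ≤ v z := by
  obtain ⟨b, hb, hmax⟩ := (hu.sub hv).exists_mem_bdry_forall_le hsym hnn hconn hb
  intro z hz
  linarith [hmax z hz, hle b hb]

theorem IsHarmonic.eq_on_clos (hsym : ∀ x y, μ x y = μ y x) (hnn : ∀ x y, 0 ≤ μ x y)
    (hconn : TilConnected μ Ω) (hb : (bdry μ Ω).Nonempty) {u v : V → ℝ}
    (hu : IsHarmonic μ Ω u) (hv : IsHarmonic μ Ω v) (heq : ∀ z ∈ bdry μ Ω, u z = v z) :
    ∀ z ∈ clos μ Ω, u z = v z := fun z hz =>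
  le_antisymm (hu.le_on_clos hsym hnn hconn hb hv (fun y hy => (heq y hy).le) z hz)
    (hv.le_on_clos hsym hnn hconn hb hu (fun y hy => (heq y hy).ge) z hz)

/-- `P(·, y)` is the harmonic extension of `δ_y / m_y` for every `y ∈ δΩ`. -/
def IsPoissonKernel (μ : V → V → ℝ) (Ω : Finset V) (P : V → V → ℝ) : Prop :=
  ∀ y ∈ bdry μ Ω, IsHarmonic μ Ω (fun z => P z y) ∧
    ∀ z ∈ bdry μ Ω, P z y = if z = y then 1 / vm μ Ω y else 0

lemma IsPoissonKernel.sum_vm_mul_eq (hnn : ∀ x y, 0 ≤ μ x y) {P : V → V → ℝ}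
    (hP : IsPoissonKernel μ Ω P) (φ : V → ℝ) {z : V} (hz : z ∈ bdry μ Ω) :
    ∑ y ∈ bdry μ Ω, vm μ Ω y * φ y * P z y = φ z := by
  rw [Finset.sum_eq_single_of_mem z hz fun y hy hyz => by
    rw [(hP y hy).2 z hz, if_neg hyz.symm, mul_zero]]
  rw [(hP z hz).2 z hz, if_pos rfl]
  field_simp [(vm_pos_of_mem_bdry hnn hz).ne']

theorem IsPoissonKernel.eq_sum_vm_mul (hsym : ∀ x y, μ x y = μ y x) (hnn : ∀ x y, 0 ≤ μ x y)
    (hconn : TilConnected μ Ω) {P : V → V → ℝ} (hP : IsPoissonKernel μ Ω P)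
    {φ u : V → ℝ} (hu : IsHarmonic μ Ω u) (hφ : ∀ z ∈ bdry μ Ω, u z = φ z)
    (hb : (bdry μ Ω).Nonempty) :
    ∀ z ∈ clos μ Ω, u z = ∑ y ∈ bdry μ Ω, vm μ Ω y * φ y * P z y :=
  hu.eq_on_clos hsym hnn hconn hb (IsHarmonic.sum_mul (fun y hy => (hP y hy).1) _)
    fun z hz => by rw [hP.sum_vm_mul_eq hnn φ hz, hφ z hz]

/-- The edge weight `μ̃_{xy}` on `δΩ`. -/
noncomputable def dtnWeight (μ : V → V → ℝ) (Ω : Finset V) (P : V → V → ℝ) (x y : V) : ℝ :=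
  (∑ z ∈ Ω, μ x z * P z y) * vm μ Ω y

lemma sum_mul_sum_eq_sum_dtnWeight_mul (P : V → V → ℝ) (φ : V → ℝ) (x : V) :
    ∑ z ∈ Ω, μ x z * ∑ y ∈ bdry μ Ω, vm μ Ω y * φ y * P z y =
      ∑ y ∈ bdry μ Ω, dtnWeight μ Ω P x y * φ y := by
  simp only [dtnWeight, Finset.mul_sum, Finset.sum_mul]
  rw [Finset.sum_comm]
  exact Finset.sum_congr rfl fun _ _ => Finset.sum_congr rfl fun _ _ => by ring

section

variable (hsym : ∀ x y, μ x y = μ y x) (hnn : ∀ x y, 0 ≤ μ x y)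
  (hconn : TilConnected μ Ω) {P : V → V → ℝ} (hP : IsPoissonKernel μ Ω P)
include hsym hnn hconn hP

theorem sum_dtnWeight {x : V} (hx : x ∈ bdry μ Ω) :
    ∑ y ∈ bdry μ Ω, dtnWeight μ Ω P x y = vm μ Ω x := by
  have hone := hP.eq_sum_vm_mul hsym hnn hconn (isHarmonic_const 1) (fun _ _ => rfl) ⟨x, hx⟩
  calc ∑ y ∈ bdry μ Ω, dtnWeight μ Ω P x y
      = ∑ z ∈ Ω, μ x z * ∑ y ∈ bdry μ Ω, vm μ Ω y * 1 * P z y := by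
        rw [sum_mul_sum_eq_sum_dtnWeight_mul]
        simp only [mul_one]
    _ = vm μ Ω x := by
        rw [vm_eq_sum_of_mem_bdry hx]
        exact Finset.sum_congr rfl fun z hz => by
          rw [← hone z (Finset.mem_union_left _ hz), mul_one]

theorem nderiv_eq_sum_dtnWeight {x : V} (hx : x ∈ bdry μ Ω) {φ u : V → ℝ}
    (hu : IsHarmonic μ Ω u) (hφ : ∀ z ∈ bdry μ Ω, u z = φ z) :
    nderiv μ Ω u x = (∑ y ∈ bdry μ Ω, dtnWeight μ Ω P x y * (φ x - φ y)) / vm μ Ω x := by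
  have hrep := hP.eq_sum_vm_mul hsym hnn hconn hu hφ ⟨x, hx⟩
  have hinner : ∑ z ∈ Ω, μ x z * u z = ∑ y ∈ bdry μ Ω, dtnWeight μ Ω P x y * φ y := by
    rw [← sum_mul_sum_eq_sum_dtnWeight_mul]
    exact Finset.sum_congr rfl fun z hz => by rw [hrep z (Finset.mem_union_left _ hz)]
  rw [nderiv]
  congr 1
  calc ∑ z ∈ Ω, μ x z * (u x - u z)
      = vm μ Ω x * φ x - ∑ z ∈ Ω, μ x z * u z := by
        rw [vm_eq_sum_of_mem_bdry hx, ← hφ x hx, Finset.sum_mul, ← Finset.sum_sub_distrib]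
        exact Finset.sum_congr rfl fun _ _ => by ring
    _ = ∑ y ∈ bdry μ Ω, dtnWeight μ Ω P x y * (φ x - φ y) := by
        rw [hinner, ← sum_dtnWeight hsym hnn hconn hP hx, Finset.sum_mul,
          ← Finset.sum_sub_distrib]
        exact Finset.sum_congr rfl fun _ _ => by ring

end

end DirichletToNeumann

theorem stmt_7_general (μ : V → V → ℝ) (Ω : Finset V)
    (hsym : ∀ x y, μ x y = μ y x) (hnn : ∀ x y, 0 ≤ μ x y)
    (hconn : TilConnected μ Ω)
    (P : V → V → ℝ)
    (hP : ∀ y ∈ bdry μ Ω, IsHarmonic μ Ω (fun z => P z y) ∧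
      ∀ z ∈ bdry μ Ω, P z y = if z = y then 1 / vm μ Ω y else 0) :
    ∀ x ∈ bdry μ Ω,
      (∑ y ∈ bdry μ Ω, (∑ z ∈ Ω, μ x z * P z y) * vm μ Ω y) = vm μ Ω x ∧
      ∀ φ u : V → ℝ, IsHarmonic μ Ω u → (∀ z ∈ bdry μ Ω, u z = φ z) →
        nderiv μ Ω u x =
          (∑ y ∈ bdry μ Ω, ((∑ z ∈ Ω, μ x z * P z y) * vm μ Ω y) * (φ x - φ y)) /
            vm μ Ω x := fun _ hx =>
  ⟨sum_dtnWeight hsym hnn hconn hP hx,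
    fun _ _ hu hφ => nderiv_eq_sum_dtnWeight hsym hnn hconn hP hx hu hφ⟩

/-- Proposition 2.5: via the Poisson kernels P(·,y) (harmonic extensions of (1/m_y)δ_y),
setting μ̃_{xy} = (Σ_{z∈Ω} μ_{xz} P(z,y)) m_y, one has Σ_{y∈δΩ} μ̃_{xy} = m_x, and the
DtN operator is Λφ(x) = (1/m_x) Σ_{y∈δΩ} μ̃_{xy}(φ(x) − φ(y)). -/
theorem stmt_7 (μ : V → V → ℝ) (Ω : Finset V)
    (hsym : ∀ x y, μ x y = μ y x) (hnn : ∀ x y, 0 ≤ μ x y)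
    (hm : ∀ x ∈ clos μ Ω, 0 < vm μ Ω x) (hconn : TilConnected μ Ω)
    (P : V → V → ℝ)
    (hP : ∀ y ∈ bdry μ Ω, IsHarmonic μ Ω (fun z => P z y) ∧
      ∀ z ∈ bdry μ Ω, P z y = if z = y then 1 / vm μ Ω y else 0) :
    ∀ x ∈ bdry μ Ω,
      (∑ y ∈ bdry μ Ω, (∑ z ∈ Ω, μ x z * P z y) * vm μ Ω y) = vm μ Ω x ∧
      ∀ φ u : V → ℝ, IsHarmonic μ Ω u → (∀ z ∈ bdry μ Ω, u z = φ z) →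
        nderiv μ Ω u x =
          (∑ y ∈ bdry μ Ω, ((∑ z ∈ Ω, μ x z * P z y) * vm μ Ω y) * (φ x - φ y)) /
            vm μ Ω x :=
  stmt_7_general μ Ω hsym hnn hconn P hP
end
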